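/- Let 𝒱 and 𝒲 be reduced cyclic words and (P,Q) ∈ 𝕃ℙ₂(𝒱,𝒲). Then (Q,P) ∈ 𝕃ℙ₂(𝒲,𝒱) and γ(P,Q) = γ(Q,P). -/

import Mathlib

open List

namespace CyclicWords

/-- A letter of the alphabet `𝔸ₙ = {a₁,…,aₙ, ā₁,…,āₙ}`: a generator index together
with a Boolean recording whether the letter is barred. -/
abbrev Letter (n : ℕ) := Bool × Fin n

/-- The involution `x ↦ x̄` on letters. -/
def Letter.bar {n : ℕ} (x : Letter n) : Letter n := (!x.1, x.2)

/-- A linear word: a finite sequence of letters. -/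
abbrev Word (n : ℕ) := List (Letter n)

/-- `W̄ = x̄ₘ ⋯ x̄₁ x̄₀` for `W = x₀x₁⋯xₘ`. -/
def Word.bar {n : ℕ} (W : Word n) : Word n := (W.map Letter.bar).reverse

/-- `Wᵏ`, the concatenation of `k` copies of `W`. -/
def wpow {n : ℕ} (W : Word n) (k : ℕ) : Word n := (List.replicate k W).flatten

/-- A linear word is freely reduced when consecutive letters are never inverse
to each other. -/
def FreelyReduced {n : ℕ} (W : Word n) : Prop :=
  W.Chain' (fun a b => b ≠ Letter.bar a)

/-- A cyclic word: an equivalence class of linear words under cyclic rotation. -/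
abbrev CWord (n : ℕ) := Cycle (Letter n)

/-- `c(W)`, the cyclic word represented by the linear word `W`. -/
def cyc {n : ℕ} (W : Word n) : CWord n := ↑W

/-- The length of a cyclic word. -/
def clen {n : ℕ} (𝒲 : CWord n) : ℕ := 𝒲.length

/-- A cyclic word is reduced if it is non-empty and all of its linear
representatives are freely reduced. -/
def CReduced {n : ℕ} (𝒲 : CWord n) : Prop :=
  𝒲 ≠ Cycle.nil ∧ ∀ W : Word n, cyc W = 𝒲 → FreelyReduced W

/-- `P` is a (linear) subword of the cyclic word `𝒲`, i.e. a linear subword of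
one of its linear representatives. -/
def Subword {n : ℕ} (P : Word n) (𝒲 : CWord n) : Prop :=
  ∃ W : Word n, cyc W = 𝒲 ∧ P <:+: W

/-- `P` is a subword of the power `𝒲ʲ`. -/
def SubwordPow {n : ℕ} (P : Word n) (𝒲 : CWord n) (j : ℕ) : Prop :=
  ∃ W : Word n, cyc W = 𝒲 ∧ P <:+: wpow W j

/-- A surface symbol: a reduced cyclic word in which every letter of `𝔸ₙ`
appears exactly once. -/
def SurfaceSymbol {n : ℕ} (𝒪 : CWord n) : Prop :=
  CReduced 𝒪 ∧ ∃ O : Word n, cyc O = 𝒪 ∧ O.Nodup ∧ ∀ x : Letter n, x ∈ O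

/-- `𝒲` is reduced and its (distinct) letters embed into `𝒪` preserving the
cyclic order. -/
def OrientPos {n : ℕ} (𝒪 𝒲 : CWord n) : Prop :=
  CReduced 𝒲 ∧ ∃ W O : Word n, cyc W = 𝒲 ∧ cyc O = 𝒪 ∧ W.Sublist O

/-- `𝒲` is reduced and its (distinct) letters embed into `𝒪` reversing the
cyclic order. -/
def OrientNeg {n : ℕ} (𝒪 𝒲 : CWord n) : Prop :=
  CReduced 𝒲 ∧ ∃ W O : Word n, cyc W = 𝒲 ∧ cyc O = 𝒪 ∧ W.Sublist O.reverse

open Classical in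
/-- The number `o(𝒲) ∈ {-1,0,1}` associated to a cyclic word `𝒲`. -/
noncomputable def o {n : ℕ} (𝒪 𝒲 : CWord n) : ℤ :=
  if OrientPos 𝒪 𝒲 then 1 else if OrientNeg 𝒪 𝒲 then -1 else 0

/-- Condition (1) of the definition of `𝒪`-linked pairs. -/
def LinkedType1 {n : ℕ} (𝒪 : CWord n) (P Q : Word n) : Prop :=
  ∃ p₁ p₂ q₁ q₂ : Letter n, P = [p₁, p₂] ∧ Q = [q₁, q₂] ∧
    o 𝒪 (cyc [Letter.bar p₁, Letter.bar q₁, p₂, q₂]) ≠ 0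

/-- Condition (2) of the definition of `𝒪`-linked pairs (`x₁`, `x₂` denote the
first and last letters of `Y`). -/
def LinkedType2 {n : ℕ} (𝒪 : CWord n) (P Q : Word n) : Prop :=
  ∃ (p₁ p₂ q₁ q₂ : Letter n) (Y : Word n), Y ≠ [] ∧
    P = p₁ :: Y ++ [p₂] ∧ Q = q₁ :: Y ++ [q₂] ∧ p₁ ≠ q₁ ∧ p₂ ≠ q₂ ∧
    ∀ x₁ x₂ : Letter n, Y.head? = some x₁ → Y.getLast? = some x₂ →
      o 𝒪 (cyc [Letter.bar p₁, Letter.bar q₁, x₁]) = o 𝒪 (cyc [p₂, q₂, Letter.bar x₂])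

/-- Condition (3) of the definition of `𝒪`-linked pairs. -/
def LinkedType3 {n : ℕ} (𝒪 : CWord n) (P Q : Word n) : Prop :=
  ∃ (p₁ p₂ q₁ q₂ : Letter n) (Y : Word n), Y ≠ [] ∧
    P = p₁ :: Y ++ [p₂] ∧ Q = q₁ :: Word.bar Y ++ [q₂] ∧
    p₁ ≠ Letter.bar q₂ ∧ p₂ ≠ Letter.bar q₁ ∧
    ∀ x₁ x₂ : Letter n, Y.head? = some x₁ → Y.getLast? = some x₂ →
      o 𝒪 (cyc [q₂, Letter.bar p₁, x₁]) = o 𝒪 (cyc [Letter.bar q₁, p₂, Letter.bar x₂])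

/-- The ordered pair `(P,Q)` is `𝒪`-linked. -/
def IsLinked {n : ℕ} (𝒪 : CWord n) (P Q : Word n) : Prop :=
  FreelyReduced P ∧ FreelyReduced Q ∧ 2 ≤ P.length ∧ 2 ≤ Q.length ∧
    (LinkedType1 𝒪 P Q ∨ LinkedType2 𝒪 P Q ∨ LinkedType3 𝒪 P Q)

open Classical in
/-- The sign of a linked pair `(P,Q)`. -/
noncomputable def sign {n : ℕ} (𝒪 : CWord n) (P Q : Word n) : ℤ :=
  match P, Q with
  | p₁ :: ps, q₁ :: qs =>
    match ps.getLast?, qs.getLast?, ps.head? with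
    | some p₂, some q₂, some x₁ =>
      if LinkedType1 𝒪 (p₁ :: ps) (q₁ :: qs) then
        o 𝒪 (cyc [Letter.bar p₁, Letter.bar q₁, p₂, q₂])
      else if LinkedType2 𝒪 (p₁ :: ps) (q₁ :: qs) then
        o 𝒪 (cyc [Letter.bar p₁, Letter.bar q₁, x₁])
      else if LinkedType3 𝒪 (p₁ :: ps) (q₁ :: qs) then
        o 𝒪 (cyc [q₂, Letter.bar p₁, x₁])
      else 0
    | _, _, _ => 0
  | _, _ => 0

/-- `𝕃ℙ₁(𝒲)`: `(P,Q)` is an `𝒪`-linked pair of subwords of `𝒲`. -/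
def LP1 {n : ℕ} (𝒪 𝒲 : CWord n) (P Q : Word n) : Prop :=
  IsLinked 𝒪 P Q ∧ Subword P 𝒲 ∧ Subword Q 𝒲

/-- `𝕃ℙ₂(𝒱,𝒲)`: `(P,Q)` is an `𝒪`-linked pair with `P` a subword of `𝒱ʲ`,
`Q` a subword of `𝒲ᵏ` in the appropriate length windows. -/
def LP2 {n : ℕ} (𝒪 𝒱 𝒲 : CWord n) (P Q : Word n) : Prop :=
  IsLinked 𝒪 P Q ∧
    ∃ j k : ℕ, 0 < j ∧ 0 < k ∧ SubwordPow P 𝒱 j ∧ SubwordPow Q 𝒲 k ∧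
      (j - 1) * clen 𝒱 < P.length ∧ P.length ≤ j * clen 𝒱 ∧
      (k - 1) * clen 𝒲 < Q.length ∧ Q.length ≤ k * clen 𝒲

/-- The cut data for `δ` when `(P,Q)` has type (1) or (2): two cuts of `𝒲`
producing `W₁` (starting at the occurrence of `p₂`, the last letter of `P`) and
`W₂` (starting at the occurrence of `q₂`, the last letter of `Q`). -/
def DeltaPair12 {n : ℕ} (𝒪 𝒲 : CWord n) (P Q W₁ W₂ : Word n) : Prop :=
  (LinkedType1 𝒪 P Q ∨ LinkedType2 𝒪 P Q) ∧
  𝒲 = cyc (W₁ ++ W₂) ∧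
  (∃ (P' : Word n) (p₂ : Letter n), P = P' ++ [p₂] ∧ W₁.head? = some p₂ ∧
      P' <:+ W₁ ++ W₂) ∧
  (∃ (Q' : Word n) (q₂ : Letter n), Q = Q' ++ [q₂] ∧ W₂.head? = some q₂ ∧
      Q' <:+ W₂ ++ W₁)

/-- The cut data for `δ` when `(P,Q)` has type (3): `W₁` runs from `p₂` to
`q₁`, and `W₂` from `q₂` to `p₁`. -/
def DeltaPair3 {n : ℕ} (𝒪 𝒲 : CWord n) (P Q W₁ W₂ : Word n) : Prop :=
  LinkedType3 𝒪 P Q ∧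
  ∃ (p₁ p₂ q₁ q₂ : Letter n) (Y Y' : Word n), Y ≠ [] ∧ Y' ≠ [] ∧
    P = p₁ :: Y ++ [p₂] ∧ Q = q₁ :: Y' ++ [q₂] ∧
    W₁.head? = some p₂ ∧ W₁.getLast? = some q₁ ∧
    W₂.head? = some q₂ ∧ W₂.getLast? = some p₁ ∧
    𝒲 = cyc (W₁ ++ Y' ++ W₂ ++ Y)

/-- The words `W₁`, `W₂` obtained by cutting `𝒲` along the linked pair `(P,Q)`. -/
def DeltaPair {n : ℕ} (𝒪 𝒲 : CWord n) (P Q W₁ W₂ : Word n) : Prop :=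
  DeltaPair12 𝒪 𝒲 P Q W₁ W₂ ∨ DeltaPair3 𝒪 𝒲 P Q W₁ W₂

open Classical in
/-- A choice of the pair of linear words obtained by cutting `𝒲` along `(P,Q)`. -/
noncomputable def deltaW {n : ℕ} (𝒪 𝒲 : CWord n) (P Q : Word n) : Word n × Word n :=
  if h : ∃ W : Word n × Word n, DeltaPair 𝒪 𝒲 P Q W.1 W.2 then h.choose else ([], [])

/-- The cyclic word `δ₁(P,Q)`. -/
noncomputable def delta1 {n : ℕ} (𝒪 𝒲 : CWord n) (P Q : Word n) : CWord n :=
  cyc (deltaW 𝒪 𝒲 P Q).1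

/-- The cyclic word `δ₂(P,Q)`. -/
noncomputable def delta2 {n : ℕ} (𝒪 𝒲 : CWord n) (P Q : Word n) : CWord n :=
  cyc (deltaW 𝒪 𝒲 P Q).2

/-- `W₁` is the linear representative of `↑W₁` obtained by cutting immediately
before (the occurrence of) the last letter of `P`: `P` occurs (in a power)
ending exactly at the cut. -/
def CutEnds {n : ℕ} (W₁ P : Word n) : Prop :=
  ∃ (P' : Word n) (p₂ : Letter n) (j : ℕ),
    P = P' ++ [p₂] ∧ W₁.head? = some p₂ ∧ P' <:+ wpow W₁ j

/-- The data for `γ(P,Q)` when `(P,Q) ∈ 𝕃ℙ₂(𝒱,𝒲)` has type (1) or (2):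
`γ(P,Q) = c(V₁W₁)` where `V₁`, `W₁` are the representatives of `𝒱`, `𝒲` obtained
by cutting immediately before `p₂`, resp. `q₂`. -/
def GammaPair12 {n : ℕ} (𝒪 𝒱 𝒲 : CWord n) (P Q : Word n) (G : CWord n) : Prop :=
  (LinkedType1 𝒪 P Q ∨ LinkedType2 𝒪 P Q) ∧
  ∃ V₁ W₁ : Word n, cyc V₁ = 𝒱 ∧ cyc W₁ = 𝒲 ∧ CutEnds V₁ P ∧ CutEnds W₁ Q ∧
    G = cyc (V₁ ++ W₁)

/-- The data for `γ(P,Q)` when `(P,Q) ∈ 𝕃ℙ₂(𝒱,𝒲)` has type (3):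
`V₁` is the subword of `𝒱` starting right after the end of `Y` and ending right
before the first letter of `Y` (whose footprint in `𝒱` is the arc `U`), and
similarly `W₁` for `Ȳ` in `𝒲`; then `γ(P,Q) = c(V₁W₁)`. -/
def GammaPair3 {n : ℕ} (𝒪 𝒱 𝒲 : CWord n) (P Q : Word n) (G : CWord n) : Prop :=
  LinkedType3 𝒪 P Q ∧
  ∃ (p₁ p₂ q₁ q₂ : Letter n) (Y V₁ W₁ U U' : Word n) (j k : ℕ),
    P = p₁ :: Y ++ [p₂] ∧ Q = q₁ :: Word.bar Y ++ [q₂] ∧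
    V₁.head? = some p₂ ∧ V₁.getLast? = some p₁ ∧
    W₁.head? = some q₂ ∧ W₁.getLast? = some q₁ ∧
    𝒱 = cyc (U ++ V₁) ∧ Y <+: wpow (U ++ V₁) j ∧ Y.length % clen 𝒱 = U.length ∧
    𝒲 = cyc (U' ++ W₁) ∧ Word.bar Y <+: wpow (U' ++ W₁) k ∧
      (Word.bar Y).length % clen 𝒲 = U'.length ∧
    G = cyc (V₁ ++ W₁)

/-- `G` is the cyclic word `γ(P,Q)` associated to `(P,Q) ∈ 𝕃ℙ₂(𝒱,𝒲)`. -/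
def GammaPair {n : ℕ} (𝒪 𝒱 𝒲 : CWord n) (P Q : Word n) (G : CWord n) : Prop :=
  GammaPair12 𝒪 𝒱 𝒲 P Q G ∨ GammaPair3 𝒪 𝒱 𝒲 P Q G

open Classical in
/-- A choice of the cyclic word `γ(P,Q)` for `(P,Q) ∈ 𝕃ℙ₂(𝒱,𝒲)`. -/
noncomputable def gamma {n : ℕ} (𝒪 𝒱 𝒲 : CWord n) (P Q : Word n) : CWord n :=
  if h : ∃ G : CWord n, GammaPair 𝒪 𝒱 𝒲 P Q G then h.choose else Cycle.nil

/-- The set of non-empty reduced cyclic words, the basis of `𝕍`. -/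
def RedCyc (n : ℕ) := {𝒲 : CWord n // CReduced 𝒲}

instance {n : ℕ} [NeZero n] : Inhabited (RedCyc n) :=
  ⟨⟨cyc [default], by
    constructor
    · intro h
      have h' : ([(default : Letter n)] : Word n) = [] := (Cycle.coe_eq_nil _).mp h
      simp at h'
    · intro W hW
      have h1 : W ~r [(default : Letter n)] := Cycle.coe_eq_coe.mp hW
      have h2 : W = [(default : Letter n)] := List.perm_singleton.mp h1.perm
      rw [h2]
      exact List.isChain_singleton _⟩⟩

open Classical in
/-- View a cyclic word as a basis element of `𝕍` (junk value if not reduced). -/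
noncomputable def toRed {n : ℕ} [NeZero n] (c : CWord n) : RedCyc n :=
  if h : CReduced c then ⟨c, h⟩ else default

end CyclicWords

/-! Swapping `P` and `Q` reverses, up to rotation, every cyclic word occurring in the linking
conditions. Reversal exchanges the two orientations, so it preserves `o ≠ 0` (condition (1));
for the three-letter words of conditions (2) and (3) it negates `o`, because a surface
symbol has no repeated letters and so cannot contain three distinct letters in both cyclic orders. Both
sides of the equations in (2) and (3) change sign, so they persist. The cut data defining `γ`
is symmetric in the two words, and `c(V₁W₁) = c(W₁V₁)`. -/

namespace List

variable {α : Type*}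

theorem IsRotated.exists_isRotated_sublist {l l' L : List α} (h : l ~r l') (hl : l <+ L) :
    ∃ L', L' ~r L ∧ l' <+ L' := by
  obtain ⟨k, hk, rfl⟩ := isRotated_iff_mod.mp h
  rw [← take_append_drop k l] at hl
  obtain ⟨r₁, r₂, rfl, h₁, h₂⟩ := append_sublist_iff.mp hl
  exact ⟨r₂ ++ r₁, isRotated_append, rotate_eq_drop_append_take hk ▸ h₂.append h₁⟩

theorem Nodup.eq_of_cons_isRotated_cons {a : α} {X Y : List α} (hn : (a :: X).Nodup)
    (h : a :: X ~r a :: Y) : X = Y := by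
  obtain ⟨k, hk⟩ := h
  rw [← rotate_mod] at hk
  have hlt : k % (a :: X).length < (a :: X).length := Nat.mod_lt _ (by simp)
  have hhead : (a :: X)[k % (a :: X).length]? = (a :: X)[0]? := by
    rw [← head?_rotate hlt, hk]; rfl
  rw [(getElem?_inj hlt hn).mp hhead, rotate_zero] at hk
  exact (cons_inj_right a).mp hk

theorem Nodup.sublist_of_cons_sublist_of_isRotated {a : α} {S T M : List α} (hM : M.Nodup)
    (hT : a :: T ~r M) (h : a :: S <+ M) : S <+ T := by
  obtain ⟨r₁, r₂, rfl, ha, hS⟩ := cons_sublist_iff.mp h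
  obtain ⟨A, B, rfl⟩ := append_of_mem ha
  have hrot : a :: (B ++ r₂ ++ A) ~r A ++ a :: B ++ r₂ := by
    simpa using (isRotated_append (l := A) (l' := a :: (B ++ r₂))).symm
  have hBA : B ++ r₂ ++ A = T :=
    (hrot.nodup_iff.mpr hM).eq_of_cons_isRotated_cons (hrot.trans hT.symm)
  exact hBA ▸ hS.trans ((sublist_append_right B r₂).trans (sublist_append_left _ A))

theorem Nodup.eq_of_pair_sublist_of_pair_sublist {b c : α} {T : List α} (hT : T.Nodup)
    (h₁ : [b, c] <+ T) (h₂ : [c, b] <+ T) : b = c := by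
  induction T with
  | nil => simp at h₁
  | cons x T ih =>
    obtain ⟨hx, hT⟩ := nodup_cons.mp hT
    cases h₁ with
    | cons _ h₁ =>
      cases h₂ with
      | cons _ h₂ => exact ih hT h₁ h₂
      | cons_cons _ h₂ => exact absurd (h₁.subset (by simp)) hx
    | cons_cons _ h₁ =>
      cases h₂ with
      | cons _ h₂ => exact absurd (h₂.subset (by simp)) hx
      | cons_cons => rfl

theorem Nodup.eq_of_cyclic_sublist_of_cyclic_sublist_reverse {a b c : α} {L M M' : List α}
    (hL : L.Nodup) (hM : M ~r L) (hM' : M' ~r L.reverse) (h : [a, b, c] <+ M)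
    (h' : [a, b, c] <+ M') : b = c := by
  obtain ⟨T, hT⟩ : ∃ T, a :: T ~r L := by
    obtain ⟨A, B, rfl⟩ := append_of_mem (hM.mem_iff.mp (show a ∈ M from h.subset (by simp)))
    exact ⟨B ++ A, by simpa using isRotated_append (l := a :: B) (l' := A)⟩
  have hTr : a :: T.reverse ~r L.reverse := by
    exact (isRotated_append (l := [a]) (l' := T.reverse)).trans (by simpa using hT.reverse)
  have hbc : [b, c] <+ T :=
    (hM.nodup_iff.mpr hL).sublist_of_cons_sublist_of_isRotated (hT.trans hM.symm) h
  have hcb : [c, b] <+ T := by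
    simpa using ((hM'.nodup_iff.mpr (nodup_reverse.mpr hL)).sublist_of_cons_sublist_of_isRotated
      (hTr.trans hM'.symm) h').reverse
  exact (hT.nodup_iff.mpr hL).of_cons.eq_of_pair_sublist_of_pair_sublist hbc hcb

end List

namespace CyclicWords

variable {n : ℕ} {𝒪 : CWord n}

@[simp] theorem Letter.bar_bar (x : Letter n) : x.bar.bar = x := by
  simp [Letter.bar]

@[simp] theorem Word.bar_bar (W : Word n) : W.bar.bar = W := by
  simp [Word.bar, map_reverse, Function.comp_def]

theorem Word.bar_eq_nil_iff {W : Word n} : W.bar = [] ↔ W = [] := by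
  simp [Word.bar]

theorem Word.head?_bar (W : Word n) : W.bar.head? = W.getLast?.map Letter.bar := by
  simp [Word.bar, head?_reverse, getLast?_map]

theorem Word.getLast?_bar (W : Word n) : W.bar.getLast? = W.head?.map Letter.bar := by
  simp [Word.bar, getLast?_reverse, head?_map]

theorem cyc_append_comm (V W : Word n) : cyc (V ++ W) = cyc (W ++ V) :=
  Cycle.coe_eq_coe.mpr isRotated_append

theorem cyc_reverse_eq_iff {V W : Word n} : cyc V.reverse = cyc W ↔ cyc V = cyc W.reverse := by
  simp only [cyc, Cycle.coe_eq_coe, ← isRotated_reverse_comm_iff]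

theorem freelyReduced_reverse_iff {W : Word n} : FreelyReduced W.reverse ↔ FreelyReduced W := by
  exact isChain_reverse.trans <| IsChain.iff fun a b => ⟨fun h e => h (by simp [e]), fun h e => h (by simp [e])⟩

theorem CReduced.cyc_reverse {W : Word n} (h : CReduced (cyc W)) : CReduced (cyc W.reverse) := by
  refine ⟨fun hnil => h.1 ?_, fun V hV => freelyReduced_reverse_iff.mp (h.2 V.reverse ?_)⟩
  · simpa [cyc] using hnil
  · exact cyc_reverse_eq_iff.mpr hV

theorem creduced_cyc_reverse_iff {W : Word n} : CReduced (cyc W.reverse) ↔ CReduced (cyc W) :=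
  ⟨fun h => by simpa using h.cyc_reverse, CReduced.cyc_reverse⟩

theorem orientPos_cyc_reverse_iff {W : Word n} :
    OrientPos 𝒪 (cyc W.reverse) ↔ OrientNeg 𝒪 (cyc W) := by
  constructor
  · rintro ⟨hred, V, O, hV, hO, hVO⟩
    exact ⟨creduced_cyc_reverse_iff.mp hred, V.reverse, O,
      cyc_reverse_eq_iff.mpr hV, hO, hVO.reverse⟩
  · rintro ⟨hred, V, O, hV, hO, hVO⟩
    exact ⟨creduced_cyc_reverse_iff.mpr hred, V.reverse, O,
      cyc_reverse_eq_iff.mpr (by simpa using hV), hO, by simpa using hVO.reverse⟩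

theorem orientNeg_cyc_reverse_iff {W : Word n} :
    OrientNeg 𝒪 (cyc W.reverse) ↔ OrientPos 𝒪 (cyc W) := by
  simpa using (orientPos_cyc_reverse_iff (𝒪 := 𝒪) (W := W.reverse)).symm

theorem not_orientPos_and_orientNeg (h𝒪 : SurfaceSymbol 𝒪) {A : Word n} (hA : A.length = 3) :
    ¬(OrientPos 𝒪 (cyc A) ∧ OrientNeg 𝒪 (cyc A)) := by
  rintro ⟨⟨-, W, O, hW, hO, hWO⟩, ⟨-, W', O', hW', hO', hWO'⟩⟩
  obtain ⟨-, O₀, hO₀, hnd, -⟩ := h𝒪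
  obtain ⟨M, hM, hAM⟩ := (Cycle.coe_eq_coe.mp hW).exists_isRotated_sublist hWO
  obtain ⟨M', hM', hAM'⟩ := (Cycle.coe_eq_coe.mp hW').exists_isRotated_sublist hWO'
  have hMO₀ : M ~r O₀ := hM.trans (Cycle.coe_eq_coe.mp (hO.trans hO₀.symm))
  have hM'O₀ : M' ~r O₀.reverse := hM'.trans (Cycle.coe_eq_coe.mp (hO'.trans hO₀.symm)).reverse
  obtain ⟨a, b, c, rfl⟩ := length_eq_three.mp hA
  have hbc : b ≠ c := by
    have := (hMO₀.nodup_iff.mpr hnd).sublist hAM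
    simp_all
  exact hbc (hnd.eq_of_cyclic_sublist_of_cyclic_sublist_reverse hMO₀ hM'O₀ hAM hAM')

theorem o_cyc_reverse_ne_zero_iff {A : Word n} : o 𝒪 (cyc A.reverse) ≠ 0 ↔ o 𝒪 (cyc A) ≠ 0 := by
  by_cases hp : OrientPos 𝒪 (cyc A) <;> by_cases hn : OrientNeg 𝒪 (cyc A) <;>
    simp [o, orientPos_cyc_reverse_iff, orientNeg_cyc_reverse_iff, hp, hn]

theorem o_cyc_reverse (h𝒪 : SurfaceSymbol 𝒪) {A : Word n} (hA : A.length = 3) :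
    o 𝒪 (cyc A.reverse) = -o 𝒪 (cyc A) := by
  have := not_orientPos_and_orientNeg h𝒪 hA
  by_cases hp : OrientPos 𝒪 (cyc A) <;> by_cases hn : OrientNeg 𝒪 (cyc A) <;>
    simp_all [o, orientPos_cyc_reverse_iff, orientNeg_cyc_reverse_iff]

theorem o_cyc_swap (h𝒪 : SurfaceSymbol 𝒪) (x y z : Letter n) :
    o 𝒪 (cyc [y, x, z]) = -o 𝒪 (cyc [x, y, z]) := by
  rw [← o_cyc_reverse h𝒪 rfl]
  exact congrArg _ (cyc_append_comm [y, x] [z])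

theorem LinkedType1.symm {P Q : Word n} (h : LinkedType1 𝒪 P Q) : LinkedType1 𝒪 Q P := by
  obtain ⟨p₁, p₂, q₁, q₂, rfl, rfl, ho⟩ := h
  refine ⟨q₁, q₂, p₁, p₂, rfl, rfl, ?_⟩
  have hrot : cyc [q₁.bar, p₁.bar, q₂, p₂] = cyc [p₁.bar, q₁.bar, p₂, q₂].reverse :=
    cyc_append_comm [q₁.bar, p₁.bar] [q₂, p₂]
  rw [hrot]
  exact o_cyc_reverse_ne_zero_iff.mpr ho

theorem LinkedType2.symm (h𝒪 : SurfaceSymbol 𝒪) {P Q : Word n} (h : LinkedType2 𝒪 P Q) :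
    LinkedType2 𝒪 Q P := by
  obtain ⟨p₁, p₂, q₁, q₂, Y, hY, rfl, rfl, h₁, h₂, ho⟩ := h
  refine ⟨q₁, q₂, p₁, p₂, Y, hY, rfl, rfl, h₁.symm, h₂.symm, fun x₁ x₂ hx₁ hx₂ => ?_⟩
  rw [o_cyc_swap h𝒪 p₁.bar, o_cyc_swap h𝒪 p₂, ho x₁ x₂ hx₁ hx₂]

theorem LinkedType3.symm (h𝒪 : SurfaceSymbol 𝒪) {P Q : Word n} (h : LinkedType3 𝒪 P Q) :
    LinkedType3 𝒪 Q P := by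
  obtain ⟨p₁, p₂, q₁, q₂, Y, hY, hP, hQ, h₁, h₂, ho⟩ := h
  refine ⟨q₁, q₂, p₁, p₂, Y.bar, mt Word.bar_eq_nil_iff.mp hY, hQ, by rwa [Word.bar_bar],
    fun e => h₂ (by simp [e]), fun e => h₁ (by simp [e]), fun x₁ x₂ hx₁ hx₂ => ?_⟩
  obtain ⟨y₂, hy₂, rfl⟩ := Option.map_eq_some_iff.mp ((Word.head?_bar Y).symm.trans hx₁)
  obtain ⟨y₁, hy₁, rfl⟩ := Option.map_eq_some_iff.mp ((Word.getLast?_bar Y).symm.trans hx₂)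
  rw [Letter.bar_bar, o_cyc_swap h𝒪, o_cyc_swap h𝒪 q₂, ho y₁ y₂ hy₁ hy₂]

theorem IsLinked.symm (h𝒪 : SurfaceSymbol 𝒪) {P Q : Word n} (h : IsLinked 𝒪 P Q) :
    IsLinked 𝒪 Q P := by
  obtain ⟨hP, hQ, hlP, hlQ, ht⟩ := h
  refine ⟨hQ, hP, hlQ, hlP, ?_⟩
  rcases ht with ht | ht | ht
  exacts [Or.inl ht.symm, Or.inr (Or.inl (ht.symm h𝒪)), Or.inr (Or.inr (ht.symm h𝒪))]

theorem LP2.symm (h𝒪 : SurfaceSymbol 𝒪) {𝒱 𝒲 : CWord n} {P Q : Word n} (h : LP2 𝒪 𝒱 𝒲 P Q) :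
    LP2 𝒪 𝒲 𝒱 Q P := by
  obtain ⟨hL, j, k, hj, hk, hP, hQ, hP₁, hP₂, hQ₁, hQ₂⟩ := h
  exact ⟨hL.symm h𝒪, k, j, hk, hj, hQ, hP, hQ₁, hQ₂, hP₁, hP₂⟩

theorem GammaPair.symm (h𝒪 : SurfaceSymbol 𝒪) {𝒱 𝒲 G : CWord n} {P Q : Word n}
    (h : GammaPair 𝒪 𝒱 𝒲 P Q G) : GammaPair 𝒪 𝒲 𝒱 Q P G := by
  rcases h with ⟨ht, V₁, W₁, hV, hW, hP, hQ, rfl⟩ | ⟨ht, p₁, p₂, q₁, q₂, Y, V₁, W₁, U, U', j, k,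
    hP, hQ, hV₁, hV₁', hW₁, hW₁', hV, hYV, hYU, hW, hYW, hYU', rfl⟩
  · exact Or.inl ⟨ht.imp LinkedType1.symm (LinkedType2.symm h𝒪), W₁, V₁, hW, hV, hQ, hP,
      cyc_append_comm V₁ W₁⟩
  · refine Or.inr ⟨ht.symm h𝒪, q₁, q₂, p₁, p₂, Y.bar, W₁, V₁, U', U, k, j, hQ, ?_, hW₁, hW₁',
      hV₁, hV₁', hW, hYW, hYU', hV, ?_, ?_, cyc_append_comm V₁ W₁⟩ <;>
    rwa [Word.bar_bar]

theorem gamma_symm_general (n : ℕ) (𝒪 𝒱 𝒲 : CWord n) (h𝒪 : SurfaceSymbol 𝒪)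
    (P Q : Word n) (h : LP2 𝒪 𝒱 𝒲 P Q) :
    LP2 𝒪 𝒲 𝒱 Q P ∧
      ∀ G : CWord n, GammaPair 𝒪 𝒱 𝒲 P Q G → GammaPair 𝒪 𝒲 𝒱 Q P G :=
  ⟨h.symm h𝒪, fun _ hG => hG.symm h𝒪⟩

/-- If `(P,Q) ∈ 𝕃ℙ₂(𝒱,𝒲)`, then `(Q,P) ∈ 𝕃ℙ₂(𝒲,𝒱)` and
`γ(P,Q) = γ(Q,P)`. -/
theorem gamma_symm (n : ℕ) (𝒪 𝒱 𝒲 : CWord n) (h𝒪 : SurfaceSymbol 𝒪)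
    (hV : CReduced 𝒱) (hW : CReduced 𝒲) (P Q : Word n) (h : LP2 𝒪 𝒱 𝒲 P Q) :
    LP2 𝒪 𝒲 𝒱 Q P ∧
      ∀ G : CWord n, GammaPair 𝒪 𝒱 𝒲 P Q G → GammaPair 𝒪 𝒲 𝒱 Q P G :=
  gamma_symm_general n 𝒪 𝒱 𝒲 h𝒪 P Q h

end CyclicWords
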